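/- Let K¹, K² : [0,T] → ℝ be continuous non-decreasing functions with Kⁱ(0) = 0, let y¹, y², u : [0,T] → ℝ be continuous with y¹(t) ≥ u(t) and y²(t) ≥ u(t) for all t, and suppose the Skorokhod (flatness) conditions ∫₀ᵀ (y¹(t) − u(t)) dK¹(t) = 0 and ∫₀ᵀ (y²(t) − u(t)) dK²(t) = 0 hold (Stieltjes integrals). Then for every α ≥ 0 and every t ∈ [0,T], ∫ₜᵀ e^{αs}(y¹(s) − y²(s)) d(K¹ − K²)(s) ≤ 0. -/

import Mathlib

open MeasureTheory Set Real

lemma aux_flat (T : ℝ) (K : StieltjesFunction ℝ) (f : ℝ → ℝ)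
    (hf : ContinuousOn f (Icc 0 T)) (hf0 : ∀ x ∈ Icc 0 T, 0 ≤ f x)
    (hflat : ∫ s in Icc 0 T, f s ∂K.measure = 0) (α t : ℝ) (ht : t ∈ Icc 0 T) :
    ∫ s in Icc t T, exp (α * s) * f s ∂K.measure = 0 := by
  have hint : IntegrableOn f (Icc 0 T) K.measure :=
    hf.integrableOn_compact isCompact_Icc
  have hnn : 0 ≤ᵐ[K.measure.restrict (Icc 0 T)] f :=
    ae_restrict_of_forall_mem measurableSet_Icc hf0
  have hzero : f =ᵐ[K.measure.restrict (Icc 0 T)] 0 :=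
    (integral_eq_zero_iff_of_nonneg_ae hnn hint).mp hflat
  have hsub : Icc t T ⊆ Icc 0 T := Icc_subset_Icc_left ht.1
  have hzero' : f =ᵐ[K.measure.restrict (Icc t T)] 0 :=
    ae_restrict_of_ae_restrict_of_subset hsub hzero
  refine integral_eq_zero_of_ae ?_
  filter_upwards [hzero'] with x hx
  simp [hx]

theorem stmt_9 (T : ℝ) (hT : 0 ≤ T) (K1 K2 : StieltjesFunction ℝ)
    (hK1c : Continuous K1) (hK2c : Continuous K2)
    (hK10 : K1 0 = 0) (hK20 : K2 0 = 0)
    (y1 y2 u : ℝ → ℝ) (hy1 : ContinuousOn y1 (Icc 0 T))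
    (hy2 : ContinuousOn y2 (Icc 0 T)) (hu : ContinuousOn u (Icc 0 T))
    (hge1 : ∀ t ∈ Icc 0 T, u t ≤ y1 t) (hge2 : ∀ t ∈ Icc 0 T, u t ≤ y2 t)
    (hflat1 : ∫ t in Icc 0 T, (y1 t - u t) ∂K1.measure = 0)
    (hflat2 : ∫ t in Icc 0 T, (y2 t - u t) ∂K2.measure = 0) :
    ∀ α : ℝ, 0 ≤ α → ∀ t ∈ Icc 0 T,
      (∫ s in Icc t T, exp (α * s) * (y1 s - y2 s) ∂K1.measure) -
        ∫ s in Icc t T, exp (α * s) * (y1 s - y2 s) ∂K2.measure ≤ 0 := by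
  intro α hα t ht
  have hsub : Icc t T ⊆ Icc 0 T := Icc_subset_Icc_left ht.1
  have hec : ContinuousOn (fun s => exp (α * s)) (Icc 0 T) :=
    (Real.continuous_exp.comp (continuous_const.mul continuous_id)).continuousOn
  have h1u : ContinuousOn (fun s => exp (α * s) * (y1 s - u s)) (Icc 0 T) :=
    hec.mul (hy1.sub hu)
  have h2u : ContinuousOn (fun s => exp (α * s) * (y2 s - u s)) (Icc 0 T) :=
    hec.mul (hy2.sub hu)
  have hi1 : IntegrableOn (fun s => exp (α * s) * (y1 s - u s)) (Icc t T) K1.measure :=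
    (h1u.mono hsub).integrableOn_compact isCompact_Icc
  have hi2 : IntegrableOn (fun s => exp (α * s) * (y2 s - u s)) (Icc t T) K1.measure :=
    (h2u.mono hsub).integrableOn_compact isCompact_Icc
  have hi1' : IntegrableOn (fun s => exp (α * s) * (y1 s - u s)) (Icc t T) K2.measure :=
    (h1u.mono hsub).integrableOn_compact isCompact_Icc
  have hi2' : IntegrableOn (fun s => exp (α * s) * (y2 s - u s)) (Icc t T) K2.measure :=
    (h2u.mono hsub).integrableOn_compact isCompact_Icc
  have key : ∀ (K : StieltjesFunction ℝ),
      (∫ s in Icc t T, exp (α * s) * (y1 s - y2 s) ∂K.measure) =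
      (∫ s in Icc t T, exp (α * s) * (y1 s - u s) ∂K.measure) -
      (∫ s in Icc t T, exp (α * s) * (y2 s - u s) ∂K.measure) := by
    intro K
    have hi1 : IntegrableOn (fun s => exp (α * s) * (y1 s - u s)) (Icc t T) K.measure :=
      (h1u.mono hsub).integrableOn_compact isCompact_Icc
    have hi2 : IntegrableOn (fun s => exp (α * s) * (y2 s - u s)) (Icc t T) K.measure :=
      (h2u.mono hsub).integrableOn_compact isCompact_Icc
    rw [← integral_sub hi1 hi2]
    congr 1
    ext s
    ring
  rw [key K1, key K2]
  have hz1 : ∫ s in Icc t T, exp (α * s) * (y1 s - u s) ∂K1.measure = 0 :=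
    aux_flat T K1 (fun s => y1 s - u s) (hy1.sub hu)
      (fun x hx => sub_nonneg.mpr (hge1 x hx)) hflat1 α t ht
  have hz2 : ∫ s in Icc t T, exp (α * s) * (y2 s - u s) ∂K2.measure = 0 :=
    aux_flat T K2 (fun s => y2 s - u s) (hy2.sub hu)
      (fun x hx => sub_nonneg.mpr (hge2 x hx)) hflat2 α t ht
  have hp1 : 0 ≤ ∫ s in Icc t T, exp (α * s) * (y2 s - u s) ∂K1.measure :=
    setIntegral_nonneg measurableSet_Icc fun x hx =>
      mul_nonneg (exp_nonneg _) (sub_nonneg.mpr (hge2 x (hsub hx)))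
  have hp2 : 0 ≤ ∫ s in Icc t T, exp (α * s) * (y1 s - u s) ∂K2.measure :=
    setIntegral_nonneg measurableSet_Icc fun x hx =>
      mul_nonneg (exp_nonneg _) (sub_nonneg.mpr (hge1 x (hsub hx)))
  rw [hz1, hz2]
  linarith
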